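/- arXiv:2603.17569 — 7 statements merged into one kernel-verified Lean document; each statement's English description precedes it below -/
import Mathlib

section
/- Let K⁽⁰⁾ be the block-constant kernel with values (x₀, y₀), and define K⁽ℓ⁾ = A K⁽ℓ⁻¹⁾ A for all ℓ ≥ 1 (the GCN-GP kernel recursion under the SBM). Then for every ℓ ≥ 1, K⁽ℓ⁾ is the block-constant kernel with values (xₗ, yₗ), where xₗ = (1/2)·m^{2ℓ}·[(x₀+y₀)(p+q)^{2ℓ} + (x₀−y₀)(p−q)^{2ℓ}] and yₗ = (1/2)·m^{2ℓ}·[(x₀+y₀)(p+q)^{2ℓ} − (x₀−y₀)(p−q)^{2ℓ}]. -/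
/-!
Block-constant kernels are closed under multiplication, and in the coordinates (x + y, x − y)
multiplying by `blockConst m a b` just scales them by `m (a + b)` and `m (a − b)`: these are the
eigenvalues of the block-constant matrix on the community-constant vectors. Hence `ℓ` layers
of `K ↦ A K A` scale `x₀ + y₀` by `(m (p + q))^(2ℓ)` and `x₀ − y₀` by `(m (p − q))^(2ℓ)`.
-/

noncomputable section

/-- The m×m all-ones real matrix. -/
def onesJ (m : ℕ) : Matrix (Fin m) (Fin m) ℝ := Matrix.of fun _ _ => 1

/-- The block-constant kernel with values (x, y): the n×n (n = 2m) block matrix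
    [[x·J, y·J], [y·J, x·J]]. -/
def blockConst (m : ℕ) (x y : ℝ) : Matrix (Fin m ⊕ Fin m) (Fin m ⊕ Fin m) ℝ :=
  Matrix.fromBlocks (x • onesJ m) (y • onesJ m) (y • onesJ m) (x • onesJ m)

/-- The population two-community SBM adjacency matrix A = [[p·J, q·J], [q·J, p·J]]. -/
def sbmAdj (m : ℕ) (p q : ℝ) : Matrix (Fin m ⊕ Fin m) (Fin m ⊕ Fin m) ℝ :=
  blockConst m p q

lemma onesJ_mul_onesJ (m : ℕ) : onesJ m * onesJ m = (m : ℝ) • onesJ m := by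
  ext i j
  simp [onesJ, Matrix.mul_apply]

lemma blockConst_mul_blockConst (m : ℕ) (a b c d : ℝ) :
    blockConst m a b * blockConst m c d =
      blockConst m ((m : ℝ) * (a * c + b * d)) ((m : ℝ) * (a * d + b * c)) := by
  simp only [blockConst, Matrix.fromBlocks_multiply, Matrix.smul_mul, Matrix.mul_smul,
    onesJ_mul_onesJ, smul_smul, ← add_smul]
  congr 2 <;> ring

lemma sbmAdj_mul_blockConst_mul_sbmAdj (m : ℕ) (p q s d : ℝ) :
    sbmAdj m p q * blockConst m ((s + d) / 2) ((s - d) / 2) * sbmAdj m p q =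
      blockConst m ((m ^ 2 * (p + q) ^ 2 * s + m ^ 2 * (p - q) ^ 2 * d) / 2)
        ((m ^ 2 * (p + q) ^ 2 * s - m ^ 2 * (p - q) ^ 2 * d) / 2) := by
  rw [sbmAdj, blockConst_mul_blockConst, blockConst_mul_blockConst]
  congr 1 <;> ring

theorem stmt0_general (m : ℕ) (p q x₀ y₀ : ℝ)
    (K : ℕ → Matrix (Fin m ⊕ Fin m) (Fin m ⊕ Fin m) ℝ)
    (hK0 : K 0 = blockConst m x₀ y₀)
    (hK : ∀ ℓ, K (ℓ + 1) = sbmAdj m p q * K ℓ * sbmAdj m p q) :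
    ∀ ℓ, 1 ≤ ℓ →
      K ℓ = blockConst m
        ((1 / 2) * (m : ℝ) ^ (2 * ℓ) *
          ((x₀ + y₀) * (p + q) ^ (2 * ℓ) + (x₀ - y₀) * (p - q) ^ (2 * ℓ)))
        ((1 / 2) * (m : ℝ) ^ (2 * ℓ) *
          ((x₀ + y₀) * (p + q) ^ (2 * ℓ) - (x₀ - y₀) * (p - q) ^ (2 * ℓ))) := by
  have layer : ∀ ℓ, K ℓ = blockConst m
      (((m * (p + q)) ^ (2 * ℓ) * (x₀ + y₀) + (m * (p - q)) ^ (2 * ℓ) * (x₀ - y₀)) / 2)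
      (((m * (p + q)) ^ (2 * ℓ) * (x₀ + y₀) - (m * (p - q)) ^ (2 * ℓ) * (x₀ - y₀)) / 2) := by
    intro ℓ
    induction ℓ with
    | zero => rw [hK0]; congr 1 <;> ring
    | succ ℓ ih =>
      rw [hK, ih, sbmAdj_mul_blockConst_mul_sbmAdj]
      congr 1 <;> ring
  intro ℓ _
  rw [layer ℓ]
  congr 1 <;> rw [mul_pow, mul_pow] <;> ring

/-- GCN-GP kernel recursion under the SBM: closed form of the kernel at layer ℓ ≥ 1. -/
theorem stmt0 (m : ℕ) (hm : 1 ≤ m) (p q x₀ y₀ : ℝ)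
    (K : ℕ → Matrix (Fin m ⊕ Fin m) (Fin m ⊕ Fin m) ℝ)
    (hK0 : K 0 = blockConst m x₀ y₀)
    (hK : ∀ ℓ, K (ℓ + 1) = sbmAdj m p q * K ℓ * sbmAdj m p q) :
    ∀ ℓ, 1 ≤ ℓ →
      K ℓ = blockConst m
        ((1 / 2) * (m : ℝ) ^ (2 * ℓ) *
          ((x₀ + y₀) * (p + q) ^ (2 * ℓ) + (x₀ - y₀) * (p - q) ^ (2 * ℓ)))
        ((1 / 2) * (m : ℝ) ^ (2 * ℓ) *
          ((x₀ + y₀) * (p + q) ^ (2 * ℓ) - (x₀ - y₀) * (p - q) ^ (2 * ℓ))) :=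
  stmt0_general m p q x₀ y₀ K hK0 hK
end
end

section
/- Let m, p, q be real numbers and let (xₗ)ₗ≥₀ and (yₗ)ₗ≥₀ be real sequences satisfying the GAT-GP SBM recurrences x_{ℓ+1} = m²·[2(p²+q²)xₗ² + 2pq(xₗyₗ + yₗ²)] and y_{ℓ+1} = m²·[2(p²+q²)yₗ² + 2pq(xₗyₗ + xₗ²)]. Then for every ℓ ≥ 0 the difference satisfies the product formula xₗ − yₗ = (x₀ − y₀)·[2m²(p² − pq + q²)]^ℓ · ∏_{j=0}^{ℓ−1} (xⱼ + yⱼ). -/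
open Finset

theorem eq_mul_pow_mul_prod_range_of_succ {M : Type*} [CommMonoid M] {d s : ℕ → M} (c : M)
    (h : ∀ n, d (n + 1) = c * d n * s n) (n : ℕ) :
    d n = d 0 * c ^ n * ∏ j ∈ range n, s j := by
  induction n with
  | zero => simp
  | succ n ih =>
    rw [h, ih, prod_range_succ, pow_succ]
    ac_rfl

theorem gat_sbm_sub_succ {m p q x y x' y' : ℝ}
    (hx : x' = m ^ 2 * (2 * (p ^ 2 + q ^ 2) * x ^ 2 + 2 * p * q * (x * y + y ^ 2)))
    (hy : y' = m ^ 2 * (2 * (p ^ 2 + q ^ 2) * y ^ 2 + 2 * p * q * (x * y + x ^ 2))) :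
    x' - y' = 2 * m ^ 2 * (p ^ 2 - p * q + q ^ 2) * (x - y) * (x + y) := by
  rw [hx, hy]
  ring

/-- Product formula for the difference sequence of the GAT-GP SBM recurrences:
    xₗ − yₗ = (x₀ − y₀)·[2m²(p² − pq + q²)]^ℓ · ∏_{j<ℓ} (xⱼ + yⱼ). -/
theorem stmt6 (m p q : ℝ) (x y : ℕ → ℝ)
    (hx : ∀ ℓ, x (ℓ + 1)
      = m ^ 2 * (2 * (p ^ 2 + q ^ 2) * (x ℓ) ^ 2 + 2 * p * q * (x ℓ * y ℓ + (y ℓ) ^ 2)))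
    (hy : ∀ ℓ, y (ℓ + 1)
      = m ^ 2 * (2 * (p ^ 2 + q ^ 2) * (y ℓ) ^ 2 + 2 * p * q * (x ℓ * y ℓ + (x ℓ) ^ 2))) :
    ∀ ℓ, x ℓ - y ℓ
      = (x 0 - y 0) * (2 * m ^ 2 * (p ^ 2 - p * q + q ^ 2)) ^ ℓ
        * ∏ j ∈ Finset.range ℓ, (x j + y j) :=
  eq_mul_pow_mul_prod_range_of_succ (d := fun ℓ ↦ x ℓ - y ℓ) _
    fun ℓ ↦ gat_sbm_sub_succ (hx ℓ) (hy ℓ)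
end

section
/- Let m, p, q, x₀, y₀ be real numbers with m ≠ 0, p > 0, q > 0, x₀ + y₀ > 0 and x₀ − y₀ > 0; set β = m²(p+q)², G = (x₀+y₀)·β, F = 2(p² − pq + q²)/(p+q)², r = (x₀−y₀)/(x₀+y₀), and define xₗ = (1/2)·(G^{2^ℓ}/β)·(1 + r·F^ℓ) and yₗ = (1/2)·(G^{2^ℓ}/β)·(1 − r·F^ℓ). Then yₗ/xₗ = (1 − r·F^ℓ)/(1 + r·F^ℓ) for all ℓ, and if F ≥ 1 the limit γ = lim_{ℓ→∞} yₗ/xₗ exists and is strictly less than 1 — namely γ = (1−r)/(1+r) if F = 1 and γ = −1 if F > 1 — so the normalized GAT-GP kernel does not converge to the all-ones matrix (no oversmoothing). -/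
open Filter Topology

theorem tendsto_one_sub_div_one_add_of_tendsto_atTop {ι : Type*} {l : Filter ι} {u : ι → ℝ}
    (hu : Tendsto u l atTop) : Tendsto (fun i => (1 - u i) / (1 + u i)) l (𝓝 (-1)) := by
  have hden : Tendsto (fun i => 1 + u i) l atTop := tendsto_atTop_add_const_left l 1 hu
  have hlim : Tendsto (fun i => -1 + 2 / (1 + u i)) l (𝓝 (-1)) := by
    simpa using (tendsto_const_nhds (x := (2 : ℝ))).div_atTop hden |>.const_add (-1)
  refine hlim.congr' ?_
  filter_upwards [hden.eventually_gt_atTop 0] with i hi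
  field_simp
  ring

theorem one_sub_div_one_add_lt_one {r : ℝ} (hr : 0 < r) : (1 - r) / (1 + r) < 1 := by
  rw [div_lt_one (by linarith)]
  linarith

theorem stmt9_general (m p q x₀ y₀ : ℝ) (hm : m ≠ 0) (hp : 0 < p) (hq : 0 < q)
    (hsum : 0 < x₀ + y₀) (hdiff : 0 < x₀ - y₀)
    (β G F r : ℝ)
    (hβ : β = m ^ 2 * (p + q) ^ 2)
    (hG : G = (x₀ + y₀) * β)
    (hr : r = (x₀ - y₀) / (x₀ + y₀))
    (x y : ℕ → ℝ)
    (hx : ∀ ℓ, x ℓ = (1 / 2) * (G ^ (2 ^ ℓ) / β) * (1 + r * F ^ ℓ))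
    (hy : ∀ ℓ, y ℓ = (1 / 2) * (G ^ (2 ^ ℓ) / β) * (1 - r * F ^ ℓ)) :
    (∀ ℓ, y ℓ / x ℓ = (1 - r * F ^ ℓ) / (1 + r * F ^ ℓ))
    ∧ (1 ≤ F → ∃ γ : ℝ,
        Filter.Tendsto (fun ℓ => y ℓ / x ℓ) Filter.atTop (nhds γ)
        ∧ γ < 1
        ∧ (F = 1 → γ = (1 - r) / (1 + r))
        ∧ (1 < F → γ = -1)) := by
  have hβ_pos : 0 < β := by rw [hβ]; positivity
  have hG_pos : 0 < G := by rw [hG]; positivity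
  have hr_pos : 0 < r := by rw [hr]; positivity
  have hratio : ∀ ℓ, y ℓ / x ℓ = (1 - r * F ^ ℓ) / (1 + r * F ^ ℓ) := fun ℓ => by
    rw [hx, hy, mul_div_mul_left _ _ (by positivity)]
  refine ⟨hratio, fun hF_ge => ?_⟩
  simp only [hratio]
  rcases hF_ge.eq_or_lt with rfl | hF_gt
  · refine ⟨(1 - r) / (1 + r), ?_, one_sub_div_one_add_lt_one hr_pos, fun _ => rfl,
      fun h => absurd h (lt_irrefl 1)⟩
    simp
  · refine ⟨-1, ?_, by norm_num, fun h => absurd h hF_gt.ne', fun _ => rfl⟩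
    exact tendsto_one_sub_div_one_add_of_tendsto_atTop
      ((tendsto_pow_atTop_atTop_of_one_lt hF_gt).const_mul_atTop hr_pos)

/-- GAT-GP avoids oversmoothing under the SBM: the ratio of inter- to intra-community
    kernel values is (1 − r·F^ℓ)/(1 + r·F^ℓ); if F ≥ 1 the limit γ exists, is strictly
    less than 1 (namely (1−r)/(1+r) if F = 1 and −1 if F > 1), so the normalized kernel
    does not converge to the all-ones matrix. -/
theorem stmt9 (m p q x₀ y₀ : ℝ) (hm : m ≠ 0) (hp : 0 < p) (hq : 0 < q)
    (hsum : 0 < x₀ + y₀) (hdiff : 0 < x₀ - y₀)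
    (β G F r : ℝ)
    (hβ : β = m ^ 2 * (p + q) ^ 2)
    (hG : G = (x₀ + y₀) * β)
    (hF : F = 2 * (p ^ 2 - p * q + q ^ 2) / (p + q) ^ 2)
    (hr : r = (x₀ - y₀) / (x₀ + y₀))
    (x y : ℕ → ℝ)
    (hx : ∀ ℓ, x ℓ = (1 / 2) * (G ^ (2 ^ ℓ) / β) * (1 + r * F ^ ℓ))
    (hy : ∀ ℓ, y ℓ = (1 / 2) * (G ^ (2 ^ ℓ) / β) * (1 - r * F ^ ℓ)) :
    (∀ ℓ, y ℓ / x ℓ = (1 - r * F ^ ℓ) / (1 + r * F ^ ℓ))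
    ∧ (1 ≤ F → ∃ γ : ℝ,
        Filter.Tendsto (fun ℓ => y ℓ / x ℓ) Filter.atTop (nhds γ)
        ∧ γ < 1
        ∧ (F = 1 → γ = (1 - r) / (1 + r))
        ∧ (1 < F → γ = -1)) :=
  stmt9_general m p q x₀ y₀ hm hp hq hsum hdiff β G F r hβ hG hr x y hx hy
end

section
/- Let U be an n×n real orthogonal matrix whose first column is v₁ and whose second column is v₂, let λ̄ ∈ ℝⁿ with first two coordinates λ̄₁, λ̄₂, and set the Specformer spectral filter S = U·diag(λ̄)·Uᵀ. Let K⁽⁰⁾ be the block-constant kernel with values (x₀, y₀) and define K⁽ℓ⁾ = S·K⁽ℓ⁻¹⁾·S for ℓ ≥ 1. Then for every ℓ ≥ 0, K⁽ℓ⁾ is the block-constant kernel with values (xₗ, yₗ), where xₗ = (1/2)·[(x₀+y₀)·λ̄₁^{2ℓ} + (x₀−y₀)·λ̄₂^{2ℓ}] and yₗ = (1/2)·[(x₀+y₀)·λ̄₁^{2ℓ} − (x₀−y₀)·λ̄₂^{2ℓ}]. -/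
noncomputable section

open Matrix

/-- v₁ = (1/√n)·1ₙ with n = 2m. -/
def vOne (m : ℕ) : Fin m ⊕ Fin m → ℝ := fun _ => 1 / Real.sqrt (2 * m)

/-- v₂ = (1/√n)·(1ₘ, −1ₘ) with n = 2m. -/
def vTwo (m : ℕ) : Fin m ⊕ Fin m → ℝ :=
  Sum.elim (fun _ => 1 / Real.sqrt (2 * m)) (fun _ => -(1 / Real.sqrt (2 * m)))

/-! The block-constant kernel with values (x, y) is m(x+y)·v₁v₁ᵀ + m(x−y)·v₂v₂ᵀ, and v₁, v₂ are
eigenvectors of the symmetric filter S with eigenvalues λ̄₁, λ̄₂. Hence each step K ↦ S K S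
multiplies the two coefficients by λ̄₁² and λ̄₂² respectively. -/

namespace Matrix

variable {n R : Type*} [Fintype n] [CommRing R]

theorem transpose_mul_diagonal_mul_transpose [DecidableEq n] (U : Matrix n n R) (d : n → R) :
    (U * diagonal d * Uᵀ)ᵀ = U * diagonal d * Uᵀ := by
  rw [transpose_mul, transpose_mul, diagonal_transpose, transpose_transpose, Matrix.mul_assoc]

theorem mul_diagonal_mul_transpose_mulVec_col [DecidableEq n] {U : Matrix n n R}
    (hU : Uᵀ * U = 1) (d : n → R) (e : n) :
    (U * diagonal d * Uᵀ) *ᵥ U.col e = d e • U.col e := by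
  rw [← mulVec_single_one, mulVec_mulVec, Matrix.mul_assoc, Matrix.mul_assoc, hU,
    Matrix.mul_one, ← mulVec_mulVec, diagonal_mulVec_single, mulVec_single]
  ext i
  simp [mul_comm]

theorem mul_vecMulVec_self_mul {S : Matrix n n R} (hS : Sᵀ = S) {v : n → R} {c : R}
    (hv : S *ᵥ v = c • v) : S * vecMulVec v v * S = c ^ 2 • vecMulVec v v := by
  rw [mul_vecMulVec, vecMulVec_mul, ← hS, vecMul_transpose, hS, hv, smul_vecMulVec,
    vecMulVec_smul, smul_smul, sq]

theorem mul_add_vecMulVec_mul {S : Matrix n n R} (hS : Sᵀ = S) {u w : n → R} {α β : R}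
    (hu : S *ᵥ u = α • u) (hw : S *ᵥ w = β • w) (a b : R) :
    S * (a • vecMulVec u u + b • vecMulVec w w) * S =
      (α ^ 2 * a) • vecMulVec u u + (β ^ 2 * b) • vecMulVec w w := by
  rw [Matrix.mul_add, Matrix.add_mul, Matrix.mul_smul, Matrix.smul_mul, Matrix.mul_smul,
    Matrix.smul_mul, mul_vecMulVec_self_mul hS hu, mul_vecMulVec_self_mul hS hw, smul_smul,
    smul_smul, mul_comm a, mul_comm b]

theorem eq_add_vecMulVec_of_iterate_mul {S : Matrix n n R} (hS : Sᵀ = S) {u w : n → R}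
    {α β : R} (hu : S *ᵥ u = α • u) (hw : S *ᵥ w = β • w) {a b : R} {K : ℕ → Matrix n n R}
    (hK0 : K 0 = a • vecMulVec u u + b • vecMulVec w w) (hK : ∀ ℓ, K (ℓ + 1) = S * K ℓ * S)
    (ℓ : ℕ) :
    K ℓ = (α ^ (2 * ℓ) * a) • vecMulVec u u + (β ^ (2 * ℓ) * b) • vecMulVec w w := by
  induction ℓ with
  | zero => simpa using hK0
  | succ ℓ ih =>
    rw [hK, ih, mul_add_vecMulVec_mul hS hu hw]
    congr 2 <;> ring

end Matrix

theorem blockConst_eq_add_vecMulVec {m : ℕ} (hm : m ≠ 0) (x y : ℝ) :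
    blockConst m x y = (m * (x + y)) • vecMulVec (vOne m) (vOne m) +
      (m * (x - y)) • vecMulVec (vTwo m) (vTwo m) := by
  have hsq : (1 / Real.sqrt (2 * m)) * (1 / Real.sqrt (2 * m)) = 1 / (2 * m) := by
    rw [div_mul_div_comm, one_mul, Real.mul_self_sqrt (by positivity)]
  ext (i | i) (j | j) <;>
    simp only [blockConst, onesJ, vOne, vTwo, fromBlocks_apply₁₁, fromBlocks_apply₁₂,
      fromBlocks_apply₂₁, fromBlocks_apply₂₂, Matrix.add_apply, Matrix.smul_apply, vecMulVec_apply,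
      Sum.elim_inl, Sum.elim_inr, of_apply, smul_eq_mul, mul_one, mul_neg, neg_mul, neg_neg,
      hsq] <;>
    field_simp <;> ring

theorem stmt13_general (m : ℕ) (hm : 1 ≤ m) (x₀ y₀ l₁ l₂ : ℝ)
    (U : Matrix (Fin m ⊕ Fin m) (Fin m ⊕ Fin m) ℝ)
    (hU1 : Uᵀ * U = 1)
    (e₁ e₂ : Fin m ⊕ Fin m)
    (hcol1 : ∀ i, U i e₁ = vOne m i) (hcol2 : ∀ i, U i e₂ = vTwo m i)
    (lam : Fin m ⊕ Fin m → ℝ) (hl1 : lam e₁ = l₁) (hl2 : lam e₂ = l₂)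
    (S : Matrix (Fin m ⊕ Fin m) (Fin m ⊕ Fin m) ℝ)
    (hS : S = U * Matrix.diagonal lam * Uᵀ)
    (K : ℕ → Matrix (Fin m ⊕ Fin m) (Fin m ⊕ Fin m) ℝ)
    (hK0 : K 0 = blockConst m x₀ y₀)
    (hK : ∀ ℓ, K (ℓ + 1) = S * K ℓ * S) :
    ∀ ℓ, K ℓ = blockConst m
        ((1 / 2) * ((x₀ + y₀) * l₁ ^ (2 * ℓ) + (x₀ - y₀) * l₂ ^ (2 * ℓ)))
        ((1 / 2) * ((x₀ + y₀) * l₁ ^ (2 * ℓ) - (x₀ - y₀) * l₂ ^ (2 * ℓ))) := by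
  have hm0 : m ≠ 0 := by omega
  have hSymm : Sᵀ = S := hS ▸ transpose_mul_diagonal_mul_transpose U lam
  have hv₁ : S *ᵥ vOne m = l₁ • vOne m := by
    rw [← funext hcol1, ← hl1, hS]
    exact mul_diagonal_mul_transpose_mulVec_col hU1 lam e₁
  have hv₂ : S *ᵥ vTwo m = l₂ • vTwo m := by
    rw [← funext hcol2, ← hl2, hS]
    exact mul_diagonal_mul_transpose_mulVec_col hU1 lam e₂
  intro ℓ
  rw [eq_add_vecMulVec_of_iterate_mul hSymm hv₁ hv₂
      (hK0.trans (blockConst_eq_add_vecMulVec hm0 x₀ y₀)) hK ℓ,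
    blockConst_eq_add_vecMulVec hm0]
  congr 2 <;> ring

/-- Specformer-GP kernel under the SBM: with the spectral filter S = U·diag(λ̄)·Uᵀ,
    where U is orthogonal with one column v₁ (filter coefficient λ̄₁) and another
    column v₂ (filter coefficient λ̄₂), the kernel recursion K⁽ℓ⁾ = S K⁽ℓ⁻¹⁾ S started
    at the block-constant kernel (x₀, y₀) stays block-constant with values
    xₗ = ½[(x₀+y₀)λ̄₁^{2ℓ} + (x₀−y₀)λ̄₂^{2ℓ}] and yₗ = ½[(x₀+y₀)λ̄₁^{2ℓ} − (x₀−y₀)λ̄₂^{2ℓ}]. -/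
theorem stmt13 (m : ℕ) (hm : 1 ≤ m) (x₀ y₀ l₁ l₂ : ℝ)
    (U : Matrix (Fin m ⊕ Fin m) (Fin m ⊕ Fin m) ℝ)
    (hU1 : Uᵀ * U = 1) (hU2 : U * Uᵀ = 1)
    (e₁ e₂ : Fin m ⊕ Fin m) (he : e₁ ≠ e₂)
    (hcol1 : ∀ i, U i e₁ = vOne m i) (hcol2 : ∀ i, U i e₂ = vTwo m i)
    (lam : Fin m ⊕ Fin m → ℝ) (hl1 : lam e₁ = l₁) (hl2 : lam e₂ = l₂)
    (S : Matrix (Fin m ⊕ Fin m) (Fin m ⊕ Fin m) ℝ)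
    (hS : S = U * Matrix.diagonal lam * Uᵀ)
    (K : ℕ → Matrix (Fin m ⊕ Fin m) (Fin m ⊕ Fin m) ℝ)
    (hK0 : K 0 = blockConst m x₀ y₀)
    (hK : ∀ ℓ, K (ℓ + 1) = S * K ℓ * S) :
    ∀ ℓ, K ℓ = blockConst m
        ((1 / 2) * ((x₀ + y₀) * l₁ ^ (2 * ℓ) + (x₀ - y₀) * l₂ ^ (2 * ℓ)))
        ((1 / 2) * ((x₀ + y₀) * l₁ ^ (2 * ℓ) - (x₀ - y₀) * l₂ ^ (2 * ℓ))) :=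
  stmt13_general m hm x₀ y₀ l₁ l₂ U hU1 e₁ e₂ hcol1 hcol2 lam hl1 hl2 S hS K hK0 hK
end
end

section
/- Let λ̄₁, λ̄₂, x₀, y₀ be real numbers with λ̄₁ ≠ 0, |λ̄₂| ≥ |λ̄₁|, x₀ + y₀ > 0 and x₀ − y₀ > 0, and define the Specformer-GP closed-form values xₗ = (1/2)·[(x₀+y₀)·λ̄₁^{2ℓ} + (x₀−y₀)·λ̄₂^{2ℓ}] and yₗ = (1/2)·[(x₀+y₀)·λ̄₁^{2ℓ} − (x₀−y₀)·λ̄₂^{2ℓ}]. Then the limit of yₗ/xₗ as ℓ → ∞ exists and is not equal to 1 — namely it equals y₀/x₀ < 1 if |λ̄₂| = |λ̄₁| and equals −1 if |λ̄₂| > |λ̄₁| — so the Specformer-GP kernel preserves community structure and avoids oversmoothing. -/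
/-!
With `A = x₀ + y₀`, `B = x₀ - y₀`, the ratio is
`yₗ / xₗ = (A λ̄₁^{2ℓ} - B λ̄₂^{2ℓ}) / (A λ̄₁^{2ℓ} + B λ̄₂^{2ℓ})`.
If `|λ̄₁| = |λ̄₂|` the common power cancels and the ratio is constantly `(A - B)/(A + B) = y₀/x₀`.
If `|λ̄₁| < |λ̄₂|`, dividing by `λ̄₂^{2ℓ}` leaves `(A qˡ - B)/(A qˡ + B)` with `q = (λ̄₁/λ̄₂)² < 1`,
which tends to `-B/B = -1`.
-/

open Filter Topology

lemma sub_div_add_mul_pow_self (A B a : ℝ) (ha : a ≠ 0) (n : ℕ) :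
    (A * a ^ n - B * a ^ n) / (A * a ^ n + B * a ^ n) = (A - B) / (A + B) := by
  rw [← sub_mul, ← add_mul, mul_div_mul_right _ _ (pow_ne_zero n ha)]

lemma sub_div_add_mul_pow_eq_div_pow (A B a b : ℝ) (hb : b ≠ 0) (n : ℕ) :
    (A * a ^ n - B * b ^ n) / (A * a ^ n + B * b ^ n)
      = (A * (a / b) ^ n - B) / (A * (a / b) ^ n + B) := by
  rw [← mul_div_mul_right (A * (a / b) ^ n - B) _ (pow_ne_zero n hb), div_pow]
  congr 1 <;> field_simp

lemma tendsto_sub_div_add_mul_pow_of_abs_lt {A B a b : ℝ} (hab : |a| < |b|) (hB : B ≠ 0) :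
    Tendsto (fun n : ℕ => (A * a ^ n - B * b ^ n) / (A * a ^ n + B * b ^ n)) atTop (𝓝 (-1)) := by
  have hb : b ≠ 0 := abs_pos.1 ((abs_nonneg a).trans_lt hab)
  have hq : |a / b| < 1 := by rwa [abs_div, div_lt_one (abs_pos.2 hb)]
  have hAq : Tendsto (fun n : ℕ => A * (a / b) ^ n) atTop (𝓝 0) := by
    simpa using (tendsto_pow_atTop_nhds_zero_of_abs_lt_one hq).const_mul A
  have hlim := (hAq.sub_const B).div (hAq.add_const B) (by simpa using hB)
  rw [zero_sub, zero_add, neg_div, div_self hB] at hlim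
  simp only [sub_div_add_mul_pow_eq_div_pow A B a b hb]
  exact hlim

/-- Specformer-GP avoids oversmoothing: for the closed-form intra/inter-community
    values xₗ, yₗ with spectral filter coefficients λ̄₁ ≠ 0 and |λ̄₂| ≥ |λ̄₁|, the
    limit of yₗ/xₗ exists and is not equal to 1 — it equals y₀/x₀ < 1 if |λ̄₂| = |λ̄₁|
    and −1 if |λ̄₂| > |λ̄₁|. -/
theorem stmt15 (l₁ l₂ x₀ y₀ : ℝ) (hl₁ : l₁ ≠ 0) (hl : |l₁| ≤ |l₂|)
    (hsum : 0 < x₀ + y₀) (hdiff : 0 < x₀ - y₀)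
    (x y : ℕ → ℝ)
    (hx : ∀ ℓ, x ℓ = (1 / 2) * ((x₀ + y₀) * l₁ ^ (2 * ℓ) + (x₀ - y₀) * l₂ ^ (2 * ℓ)))
    (hy : ∀ ℓ, y ℓ = (1 / 2) * ((x₀ + y₀) * l₁ ^ (2 * ℓ) - (x₀ - y₀) * l₂ ^ (2 * ℓ))) :
    ∃ γ : ℝ,
      Filter.Tendsto (fun ℓ => y ℓ / x ℓ) Filter.atTop (nhds γ)
      ∧ γ ≠ 1
      ∧ (|l₂| = |l₁| → γ = y₀ / x₀ ∧ y₀ / x₀ < 1)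
      ∧ (|l₁| < |l₂| → γ = -1) := by
  have hyx : y₀ / x₀ < 1 := (div_lt_one (by linarith)).2 (by linarith)
  have hratio : ∀ ℓ, y ℓ / x ℓ =
      ((x₀ + y₀) * (l₁ ^ 2) ^ ℓ - (x₀ - y₀) * (l₂ ^ 2) ^ ℓ) /
        ((x₀ + y₀) * (l₁ ^ 2) ^ ℓ + (x₀ - y₀) * (l₂ ^ 2) ^ ℓ) := fun ℓ => by
    rw [hx, hy, pow_mul, pow_mul, mul_div_mul_left _ _ (by norm_num : (1 / 2 : ℝ) ≠ 0)]
  rcases hl.eq_or_lt with heq | hlt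
  · have hsq : l₂ ^ 2 = l₁ ^ 2 := sq_eq_sq_iff_abs_eq_abs _ _ |>.2 heq.symm
    refine ⟨y₀ / x₀, ?_, hyx.ne, fun _ => ⟨rfl, hyx⟩, fun h => absurd heq h.ne⟩
    have hconst : (x₀ + y₀ - (x₀ - y₀)) / (x₀ + y₀ + (x₀ - y₀)) = y₀ / x₀ := by ring
    simp only [hratio, hsq, sub_div_add_mul_pow_self _ _ _ (pow_ne_zero 2 hl₁), hconst]
    exact tendsto_const_nhds
  · refine ⟨-1, ?_, by norm_num, fun h => absurd h.symm hlt.ne, fun _ => rfl⟩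
    have hsq : |l₁ ^ 2| < |l₂ ^ 2| := by
      rw [abs_pow, abs_pow]
      exact pow_lt_pow_left₀ hlt (abs_nonneg _) two_ne_zero
    simpa only [hratio] using tendsto_sub_div_add_mul_pow_of_abs_lt hsq hdiff.ne'
end

section
/- Let n, T, K ≥ 1 be natural numbers, let Ã₁, …, Ã_T and M be fixed n×n real matrices, and on a probability space let {β_i^{(k)} : 1 ≤ i ≤ T, 1 ≤ k ≤ K} be jointly independent real random variables with E[β_i^{(k)}] = 0 and E[(β_i^{(k)})²] = σ_k² for each k. Define the random matrix S = (Σ_{i=1}^T β_i^{(1)}·Ã_i)·(Σ_{i=1}^T β_i^{(2)}·Ã_i)···(Σ_{i=1}^T β_i^{(K)}·Ã_i). Then the entrywise expectation satisfies E[S·M·Sᵀ] = (∏_{k=1}^K σ_k²) · Σ_{i₁=1}^T ··· Σ_{i_K=1}^T Ã_{i₁}···Ã_{i_K}·M·Ã_{i_K}ᵀ···Ã_{i₁}ᵀ. -/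
open MeasureTheory ProbabilityTheory Matrix

/-!
Expanding the product, `S = ∑_g c_g • A_g` over index paths `g : Fin K → Fin T`, with
`c_g = ∏_k β_{g k}^{(k)}` and `A_g = Ã_{g 1} ⋯ Ã_{g K}`. By independence, `E[c_g c_h]` factors over
the coordinates `(i, k)`, and a coordinate hit by exactly one of `g`, `h` contributes a vanishing
mean; so the coefficients are orthogonal, `E[c_g c_h] = δ_{gh} ∏_k σ_k²`, and only the diagonal
terms `A_g M A_gᵀ` survive.
-/

theorem prod_finRange_map_sum_smul {R A ι : Type*} [CommSemiring R] [NonAssocSemiring A]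
    [Module R A] [SMulCommClass R A A] [IsScalarTower R A A] [Fintype ι] (K : ℕ)
    (c : Fin K → ι → R) (D : ι → A) :
    ((List.finRange K).map fun k => ∑ i, c k i • D i).prod
      = ∑ g : Fin K → ι, (∏ k, c k (g k)) • ((List.finRange K).map fun k => D (g k)).prod := by
  induction K with
  | zero => simp
  | succ K ih =>
    rw [List.finRange_succ, List.map_cons, List.prod_cons, List.map_map, Function.comp_def,
      ih (fun k => c k.succ), Finset.sum_mul_sum, ← Fintype.sum_prod_type']
    refine Fintype.sum_equiv (Fin.consEquiv fun _ => ι) _ _ fun ⟨i, g⟩ => ?_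
    rw [smul_mul_smul_comm, Fin.prod_univ_succ]
    simp [Fin.consEquiv, Function.comp_def]

theorem prod_eq_prod_pow_ite {M ι κ : Type*} [CommMonoid M] [Fintype ι] [Fintype κ]
    [DecidableEq ι] (x : ι → κ → M) (g : κ → ι) :
    ∏ k, x (g k) k = ∏ p : ι × κ, x p.1 p.2 ^ (if g p.2 = p.1 then 1 else 0) := by
  rw [Fintype.prod_prod_type, Finset.prod_comm]
  simp [pow_ite, Finset.prod_ite_eq]

theorem prod_mul_prod_eq_prod_pow {M ι κ : Type*} [CommMonoid M] [Fintype ι] [Fintype κ]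
    [DecidableEq ι] (x : ι → κ → M) (g h : κ → ι) :
    (∏ k, x (g k) k) * ∏ k, x (h k) k
      = ∏ p : ι × κ, x p.1 p.2 ^ ((if g p.2 = p.1 then 1 else 0) + if h p.2 = p.1 then 1 else 0) := by
  simp only [pow_add, Finset.prod_mul_distrib, ← prod_eq_prod_pow_ite]

section

variable {Ω : Type*} [MeasurableSpace Ω] {μ : Measure Ω}

theorem integral_sum_smul_mul_mul_transpose {γ m n : Type*} [Fintype γ] [DecidableEq γ]
    [Fintype n] (c : γ → Ω → ℝ) (A : γ → Matrix m n ℝ) (M : Matrix n n ℝ) (v : ℝ)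
    (hint : ∀ g h, Integrable (fun ω => c g ω * c h ω) μ)
    (horth : ∀ g h, ∫ ω, c g ω * c h ω ∂μ = if g = h then v else 0) :
    (Matrix.of fun a b => ∫ ω, ((∑ g, c g ω • A g) * M * (∑ g, c g ω • A g)ᵀ) a b ∂μ)
      = v • ∑ g, A g * M * (A g)ᵀ := by
  have hexpand : ∀ ω, (∑ g, c g ω • A g) * M * (∑ g, c g ω • A g)ᵀ
      = ∑ g, ∑ h, (c g ω * c h ω) • (A g * M * (A h)ᵀ) := by
    intro ω
    simp only [transpose_sum, transpose_smul, Matrix.sum_mul, Matrix.mul_sum, Finset.smul_sum,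
      Matrix.smul_mul, Matrix.mul_smul, smul_smul]
    rw [Finset.sum_comm]
    simp only [mul_comm]
  ext a b
  simp only [of_apply, hexpand, Matrix.sum_apply, Matrix.smul_apply, smul_eq_mul]
  rw [integral_finsetSum _ fun g _ => integrable_finsetSum _ fun h _ => (hint g h).mul_const _]
  simp only [integral_finsetSum _ fun h _ => (hint _ h).mul_const _, integral_mul_const, horth,
    ite_mul, zero_mul, Finset.sum_ite_eq, Finset.mem_univ, if_true, Finset.mul_sum]

theorem ProbabilityTheory.iIndepFun.integrable_fun_prod {ι : Type*} [Fintype ι]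
    {X : ι → Ω → ℝ} (hX : iIndepFun X μ) (hmeas : ∀ i, Measurable (X i))
    (hint : ∀ i, Integrable (X i) μ) :
    Integrable (fun ω => ∏ i, X i ω) μ := by
  refine ⟨Finset.aestronglyMeasurable_fun_prod _ fun i _ => (hint i).1, ?_⟩
  have hlint := lintegral_prod_eq_prod_lintegral_of_indepFun Finset.univ (fun i ω => ‖X i ω‖ₑ)
    (hX.comp (fun _ => enorm) fun _ => measurable_enorm) fun i => (hmeas i).enorm
  simp only [HasFiniteIntegral, enorm, nnnorm_prod, ENNReal.ofNNReal_finsetProd] at hlint ⊢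
  rw [hlint]
  exact ENNReal.prod_lt_top fun i _ => (hint i).2

variable {ι κ : Type*} [Fintype ι] [Fintype κ] [DecidableEq ι] {β : ι → κ → Ω → ℝ}

theorem integrable_prod_mul_prod (hindep : iIndepFun (fun p : ι × κ => β p.1 p.2) μ)
    (hmeas : ∀ i k, Measurable (β i k)) (hsq : ∀ i k, Integrable (fun ω => β i k ω ^ 2) μ)
    (g h : κ → ι) :
    Integrable (fun ω => (∏ k, β (g k) k ω) * ∏ k, β (h k) k ω) μ := by
  have := hindep.isProbabilityMeasure
  simp only [fun ω => prod_mul_prod_eq_prod_pow (fun i k => β i k ω) g h]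
  refine (hindep.comp _ fun p => measurable_id.pow_const _).integrable_fun_prod
    (fun p => (hmeas _ _).pow_const _) fun ⟨i, k⟩ => ?_
  have hβ : Integrable (β i k) μ :=
    ((memLp_two_iff_integrable_sq (hmeas i k).aestronglyMeasurable).2 (hsq i k)).integrable
      one_le_two
  split_ifs <;> simp [Function.comp_def, hβ, hsq i k]

theorem integral_prod_mul_prod_eq_ite (hindep : iIndepFun (fun p : ι × κ => β p.1 p.2) μ)
    (hmeas : ∀ i k, Measurable (β i k)) {σ : κ → ℝ} (hmean : ∀ i k, ∫ ω, β i k ω ∂μ = 0)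
    (hvar : ∀ i k, ∫ ω, β i k ω ^ 2 ∂μ = σ k ^ 2) (g h : κ → ι) :
    ∫ ω, (∏ k, β (g k) k ω) * ∏ k, β (h k) k ω ∂μ = if g = h then ∏ k, σ k ^ 2 else 0 := by
  have := hindep.isProbabilityMeasure
  simp only [fun ω => prod_mul_prod_eq_prod_pow (fun i k => β i k ω) g h]
  rw [hindep.integral_fun_prod_comp (f := fun p x => x ^ _) (fun p => (hmeas _ _).aemeasurable)
    fun p => (measurable_id.pow_const _).aestronglyMeasurable]
  split_ifs with hgh
  · subst hgh
    rw [prod_eq_prod_pow_ite (fun (_ : ι) k => σ k ^ 2) g]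
    refine Finset.prod_congr rfl fun ⟨i, k⟩ _ => ?_
    split_ifs <;> simp [hvar]
  · obtain ⟨k, hk⟩ := Function.ne_iff.1 hgh
    refine Finset.prod_eq_zero (Finset.mem_univ (g k, k)) ?_
    simp [Ne.symm hk, hmean]

end

theorem stmt16_general {Ω : Type*} [MeasurableSpace Ω] (μ : Measure Ω)
    (n T K : ℕ)
    (Atil : Fin T → Matrix (Fin n) (Fin n) ℝ) (M : Matrix (Fin n) (Fin n) ℝ)
    (β : Fin T → Fin K → Ω → ℝ)
    (hmeas : ∀ i k, Measurable (β i k))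
    (hindep : iIndepFun (m := fun _ : Fin T × Fin K => (inferInstance : MeasurableSpace ℝ))
      (fun p ω => β p.1 p.2 ω) μ)
    (σ : Fin K → ℝ)
    (hmean : ∀ i k, ∫ ω, β i k ω ∂μ = 0)
    (hvar : ∀ i k, ∫ ω, (β i k ω) ^ 2 ∂μ = (σ k) ^ 2)
    (hsq : ∀ i k, Integrable (fun ω => (β i k ω) ^ 2) μ)
    (S : Ω → Matrix (Fin n) (Fin n) ℝ)
    (hS : ∀ ω, S ω = ((List.finRange K).map (fun k => ∑ i, β i k ω • Atil i)).prod) :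
    (Matrix.of fun a b => ∫ ω, (S ω * M * (S ω)ᵀ) a b ∂μ)
      = (∏ k, (σ k) ^ 2) •
          ∑ g : Fin K → Fin T,
            ((List.finRange K).map (fun k => Atil (g k))).prod * M *
              (((List.finRange K).map (fun k => Atil (g k))).prod)ᵀ := by
  obtain rfl : S = fun ω => ∑ g : Fin K → Fin T,
      (∏ k, β (g k) k ω) • ((List.finRange K).map fun k => Atil (g k)).prod :=
    funext fun ω => (hS ω).trans (prod_finRange_map_sum_smul K (fun k i => β i k ω) Atil)
  exact integral_sum_smul_mul_mul_transpose _ _ M _ (integrable_prod_mul_prod hindep hmeas hsq)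
    (integral_prod_mul_prod_eq_ite hindep hmeas hmean hvar)

/-- Second-moment identity for the GTN meta-path operator: if
    S = (Σᵢ βᵢ⁽¹⁾Ãᵢ)···(Σᵢ βᵢ⁽ᴷ⁾Ãᵢ) with jointly independent centered coefficients
    βᵢ⁽ᵏ⁾ of variance σₖ², then entrywise
    E[S·M·Sᵀ] = (∏ₖ σₖ²) · Σ_{i₁,…,i_K} Ã_{i₁}···Ã_{i_K}·M·Ã_{i_K}ᵀ···Ã_{i₁}ᵀ. -/
theorem stmt16 {Ω : Type*} [MeasurableSpace Ω] (μ : Measure Ω) [IsProbabilityMeasure μ]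
    (n T K : ℕ) (hn : 1 ≤ n) (hT : 1 ≤ T) (hK : 1 ≤ K)
    (Atil : Fin T → Matrix (Fin n) (Fin n) ℝ) (M : Matrix (Fin n) (Fin n) ℝ)
    (β : Fin T → Fin K → Ω → ℝ)
    (hmeas : ∀ i k, Measurable (β i k))
    (hindep : iIndepFun (m := fun _ : Fin T × Fin K => (inferInstance : MeasurableSpace ℝ))
      (fun p ω => β p.1 p.2 ω) μ)
    (σ : Fin K → ℝ)
    (hmean : ∀ i k, ∫ ω, β i k ω ∂μ = 0)
    (hvar : ∀ i k, ∫ ω, (β i k ω) ^ 2 ∂μ = (σ k) ^ 2)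
    (hsq : ∀ i k, Integrable (fun ω => (β i k ω) ^ 2) μ)
    (S : Ω → Matrix (Fin n) (Fin n) ℝ)
    (hS : ∀ ω, S ω = ((List.finRange K).map (fun k => ∑ i, β i k ω • Atil i)).prod) :
    (Matrix.of fun a b => ∫ ω, (S ω * M * (S ω)ᵀ) a b ∂μ)
      = (∏ k, (σ k) ^ 2) •
          ∑ g : Fin K → Fin T,
            ((List.finRange K).map (fun k => Atil (g k))).prod * M *
              (((List.finRange K).map (fun k => Atil (g k))).prod)ᵀ :=
  stmt16_general μ n T K Atil M β hmeas hindep σ hmean hvar hsq S hS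
end

section
/- Let U be an n×n real orthogonal matrix, M a fixed n×n real matrix, and let λ, λ′ : Ω → ℝⁿ be random vectors on a probability space with E[|λ_a·λ′_b|] < ∞ for all indices a, b. Define the matrix K_λ by (K_λ)_{ab} = E[λ_a·λ′_b]. Then the entrywise expectation satisfies E[(U·diag(λ)·Uᵀ)·M·(U·diag(λ′)·Uᵀ)] = U·(K_λ ⊙ (Uᵀ·M·U))·Uᵀ, where ⊙ denotes the entrywise (Hadamard) product. -/
open MeasureTheory Matrix

/-!
The identity is pure linear algebra followed by linearity of expectation. Since
`(A * diagonal d * B) * M * (C * diagonal e * D) = A * (vecMulVec d e ⊙ (B * M * C)) * D`,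
the random matrix on the left is a fixed linear image of the rank-one random matrix
`vecMulVec (lam ω) (lam' ω)`, whose entrywise expectation is `Klam`; the expectation commutes with
that linear map because each entry is a finite sum of integrable terms.
-/

namespace Matrix

variable {l m n p : Type*}

theorem diagonal_mul_mul_diagonal {α : Type*} [CommSemiring α] [Fintype m] [Fintype n]
    [DecidableEq m] [DecidableEq n]
    (d : m → α) (A : Matrix m n α) (e : n → α) :
    diagonal d * A * diagonal e = vecMulVec d e ⊙ A := by
  ext a b
  simp only [mul_diagonal, diagonal_mul, hadamard_apply, vecMulVec_apply]
  ring

theorem mul_diagonal_mul_mul_mul_diagonal_mul {α : Type*} [CommSemiring α] [Fintype l]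
    [Fintype n] [Fintype p] [DecidableEq l]
    (A : Matrix m l α) (d : l → α) (B : Matrix l n α) (M : Matrix n p α) (C : Matrix p l α)
    (e : l → α) (D : Matrix l m α) :
    (A * diagonal d * B) * M * (C * diagonal e * D) = A * (vecMulVec d e ⊙ (B * M * C)) * D := by
  rw [← diagonal_mul_mul_diagonal]
  simp only [Matrix.mul_assoc]

end Matrix

section EntrywiseIntegral

variable {Ω 𝕜 l m n p : Type*} [MeasurableSpace Ω] {μ : Measure Ω} [RCLike 𝕜]
  [Fintype m] [Fintype n]

theorem integral_mul_mul_apply {X : Ω → Matrix m n 𝕜}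
    (hX : ∀ a b, Integrable (fun ω => X ω a b) μ) (A : Matrix l m 𝕜) (B : Matrix n p 𝕜)
    (i : l) (j : p) :
    ∫ ω, (A * X ω * B) i j ∂μ = (A * Matrix.of (fun a b => ∫ ω, X ω a b ∂μ) * B) i j := by
  have hterm : ∀ a b, Integrable (fun ω => A i a * X ω a b * B b j) μ :=
    fun a b => ((hX a b).const_mul _).mul_const _
  simp only [mul_apply, Finset.sum_mul, of_apply]
  rw [integral_finsetSum _ fun b _ => integrable_finsetSum _ fun a _ => hterm a b]
  refine Finset.sum_congr rfl fun b _ => ?_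
  rw [integral_finsetSum _ fun a _ => hterm a b]
  simp only [integral_mul_const, integral_const_mul]

end EntrywiseIntegral

theorem stmt17_general {Ω : Type*} [MeasurableSpace Ω] (μ : Measure Ω)
    (n : ℕ) (U M : Matrix (Fin n) (Fin n) ℝ)
    (lam lam' : Ω → Fin n → ℝ)
    (hint : ∀ a b, Integrable (fun ω => lam ω a * lam' ω b) μ)
    (Klam : Matrix (Fin n) (Fin n) ℝ)
    (hKlam : ∀ a b, Klam a b = ∫ ω, lam ω a * lam' ω b ∂μ) :
    (Matrix.of fun i j =>
        ∫ ω, ((U * Matrix.diagonal (lam ω) * Uᵀ) * M *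
              (U * Matrix.diagonal (lam' ω) * Uᵀ)) i j ∂μ)
      = U * Matrix.hadamard Klam (Uᵀ * M * U) * Uᵀ := by
  have hmean : Matrix.of (fun a b => ∫ ω, (vecMulVec (lam ω) (lam' ω) ⊙ (Uᵀ * M * U)) a b ∂μ)
      = Klam ⊙ (Uᵀ * M * U) := by
    ext a b
    simp only [of_apply, hadamard_apply, vecMulVec_apply, integral_mul_const, hKlam]
  have hX : ∀ a b, Integrable (fun ω => (vecMulVec (lam ω) (lam' ω) ⊙ (Uᵀ * M * U)) a b) μ :=
    fun a b => (hint a b).mul_const _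
  ext i j
  simp only [of_apply, mul_diagonal_mul_mul_mul_diagonal_mul]
  rw [integral_mul_mul_apply hX, hmean]

/-- Specformer-GP node-level kernel identity: for an orthogonal matrix U, a fixed
    matrix M, and random spectral coefficient vectors λ, λ′ with integrable products,
    E[(U·diag(λ)·Uᵀ)·M·(U·diag(λ′)·Uᵀ)] = U·(K_λ ⊙ (Uᵀ·M·U))·Uᵀ entrywise, where
    (K_λ)_{ab} = E[λ_a·λ′_b] and ⊙ is the Hadamard product. -/
theorem stmt17 {Ω : Type*} [MeasurableSpace Ω] (μ : Measure Ω) [IsProbabilityMeasure μ]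
    (n : ℕ) (U M : Matrix (Fin n) (Fin n) ℝ)
    (hU1 : Uᵀ * U = 1) (hU2 : U * Uᵀ = 1)
    (lam lam' : Ω → Fin n → ℝ)
    (hint : ∀ a b, Integrable (fun ω => lam ω a * lam' ω b) μ)
    (Klam : Matrix (Fin n) (Fin n) ℝ)
    (hKlam : ∀ a b, Klam a b = ∫ ω, lam ω a * lam' ω b ∂μ) :
    (Matrix.of fun i j =>
        ∫ ω, ((U * Matrix.diagonal (lam ω) * Uᵀ) * M *
              (U * Matrix.diagonal (lam' ω) * Uᵀ)) i j ∂μ)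
      = U * Matrix.hadamard Klam (Uᵀ * M * U) * Uᵀ :=
  stmt17_general μ n U M lam lam' hint Klam hKlam
end
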